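/- arXiv:1612.01391 — 6 statements merged into one kernel-verified Lean document; each statement's English description precedes it below -/
import Mathlib

section
/- For every λ > 0, the integral A(λ) = ∫_0^∞ {t}{λt}/t² dt converges, and as λ → 0⁺ one has A(λ) = (λ/2) log(1/λ) + ((1 + A(1))/2) λ + O(λ²). -/
/-!
Split `A(λ)` at `1` and `1/λ`. On `(0, 1]` the integrand equals `λ`. On `(1, 1/λ]` it equals
`λ{t}/t`; integrating `{t} - 1/2` against `1/t` by parts, with the bounded periodic primitive
`G = ({t}² - {t})/2`, gives `(λ/2) log(1/λ) + λ ∫_1^∞ G/t² + O(λ²)`. The substitution `u = λt`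
turns the rest into `λ ∫_1^∞ {u}{u/λ}/u² du`, and replacing `{u/λ}` by `1/2` there costs only
`O(λ²)`: on each `[n, n + 1)` the factor `{u}/u²` is smooth, of size and slope at most `1/n²`,
while `{u/λ} - 1/2` has the primitive `λ G(u/λ)` of size `λ/8`. The constants add up to
`(1 + A(1))/2` because `{t}² = {t} + 2G(t)`.
-/

open MeasureTheory Set

/-- `A(λ) = ∫_0^∞ {t}{λt}/t² dt`. -/
noncomputable def A (l : ℝ) : ℝ := ∫ t in Ioi (0:ℝ), Int.fract t * Int.fract (l * t) / t ^ 2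

open Real

lemma fract_le_self_of_nonneg {x : ℝ} (hx : 0 ≤ x) : Int.fract x ≤ x := by
  have : (0 : ℝ) ≤ ⌊x⌋ := by exact_mod_cast Int.floor_nonneg.mpr hx
  rw [← Int.self_sub_floor]
  linarith

lemma abs_fract_le_one (x : ℝ) : |Int.fract x| ≤ 1 := by
  rw [abs_of_nonneg (Int.fract_nonneg x)]
  exact (Int.fract_lt_one x).le

lemma abs_fract_sub_half_le (x : ℝ) : |Int.fract x - 1 / 2| ≤ 1 / 2 := by
  rw [abs_le]
  constructor <;> linarith [Int.fract_nonneg x, Int.fract_lt_one x]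

lemma abs_fract_mul_fract_le_one (x y : ℝ) : |Int.fract x * Int.fract y| ≤ 1 := by
  rw [abs_mul]
  exact mul_le_one₀ (abs_fract_le_one x) (abs_nonneg _) (abs_fract_le_one y)

lemma intervalIntegrable_fract (a b : ℝ) : IntervalIntegrable Int.fract volume a b :=
  intervalIntegrable_const.mono_fun' measurable_fract.aestronglyMeasurable
    (ae_of_all _ abs_fract_le_one)

noncomputable def sawtoothPrimitive (t : ℝ) : ℝ := (Int.fract t ^ 2 - Int.fract t) / 2

@[fun_prop]
lemma continuous_sawtoothPrimitive : Continuous sawtoothPrimitive :=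
  ContinuousOn.comp_fract'' (f := fun y : ℝ => (y ^ 2 - y) / 2) (by fun_prop) (by norm_num)

lemma abs_sawtoothPrimitive_le (t : ℝ) : |sawtoothPrimitive t| ≤ 1 / 8 := by
  have h0 := Int.fract_nonneg t
  have h1 := Int.fract_lt_one t
  rw [abs_le, sawtoothPrimitive]
  constructor <;> nlinarith [sq_nonneg (Int.fract t - 1 / 2)]

lemma hasDerivWithinAt_sawtoothPrimitive (t : ℝ) :
    HasDerivWithinAt sawtoothPrimitive (Int.fract t - 1 / 2) (Ioi t) t := by
  have hpoly : HasDerivAt (fun s : ℝ => ((s - ⌊t⌋) ^ 2 - (s - ⌊t⌋)) / 2)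
      (Int.fract t - 1 / 2) t := by
    have h := (hasDerivAt_id' t).sub_const (⌊t⌋ : ℝ)
    refine ((h.pow 2).sub h).div_const 2 |>.congr_deriv ?_
    rw [← Int.self_sub_floor]; ring
  -- on `[t, ⌊t⌋ + 1)` the primitive is the polynomial `hpoly`
  refine hpoly.hasDerivWithinAt.congr_of_eventuallyEq ?_
    (by simp only [sawtoothPrimitive, Int.self_sub_floor])
  filter_upwards [Ioo_mem_nhdsGT (Int.lt_floor_add_one t)] with s hs
  have : ⌊s⌋ = ⌊t⌋ := Int.floor_eq_iff.mpr
    ⟨(Int.floor_le t).trans hs.1.le, by exact_mod_cast hs.2⟩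
  simp only [sawtoothPrimitive, ← Int.self_sub_floor, this]

lemma hasDerivWithinAt_mul_sawtoothPrimitive_div {l : ℝ} (hl : 0 < l) (u : ℝ) :
    HasDerivWithinAt (fun u => l * sawtoothPrimitive (u / l)) (Int.fract (u / l) - 1 / 2)
      (Ioi u) u := by
  have hinner : HasDerivWithinAt (fun u : ℝ => u / l) (1 / l) (Ioi u) u :=
    ((hasDerivAt_id u).div_const l).hasDerivWithinAt
  have hmaps : MapsTo (fun u : ℝ => u / l) (Ioi u) (Ioi (u / l)) :=
    fun x hx => div_lt_div_of_pos_right hx hl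
  refine (((hasDerivWithinAt_sawtoothPrimitive (u / l)).comp u hinner hmaps).const_mul l
    ).congr_deriv ?_
  field_simp

lemma rpow_neg_two_eqOn_Ioi {a : ℝ} (ha : 0 ≤ a) :
    EqOn (fun t : ℝ => t ^ (-2 : ℝ)) (fun t => (t ^ 2)⁻¹) (Ioi a) := fun t ht => by
  simp only [rpow_neg (ha.trans ht.le), rpow_two]

lemma integrableOn_Ioi_inv_sq {a : ℝ} (ha : 0 < a) :
    IntegrableOn (fun t : ℝ => (t ^ 2)⁻¹) (Ioi a) :=
  (integrableOn_Ioi_rpow_of_lt (by norm_num) ha).congr_fun (rpow_neg_two_eqOn_Ioi ha.le)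
    measurableSet_Ioi

lemma integral_Ioi_inv_sq {a : ℝ} (ha : 0 < a) : ∫ t in Ioi a, (t ^ 2)⁻¹ = a⁻¹ := by
  rw [← setIntegral_congr_fun measurableSet_Ioi (rpow_neg_two_eqOn_Ioi ha.le),
    integral_Ioi_rpow_of_lt (by norm_num) ha]
  norm_num [rpow_neg_one]

lemma integrableOn_Ioi_div_sq {f : ℝ → ℝ} {a M : ℝ} (ha : 0 < a) (hf : Measurable f)
    (hM : ∀ t, |f t| ≤ M) : IntegrableOn (fun t => f t / t ^ 2) (Ioi a) := by
  simpa only [div_eq_mul_inv, IntegrableOn] using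
    (integrableOn_Ioi_inv_sq ha).bdd_mul hf.aestronglyMeasurable (ae_of_all _ hM)

lemma abs_integral_Ioi_div_sq_le {f : ℝ → ℝ} {a M : ℝ} (ha : 0 < a) (hM : ∀ t, |f t| ≤ M) :
    |∫ t in Ioi a, f t / t ^ 2| ≤ M / a := by
  have hbound : ∀ t ∈ Ioi a, ‖f t / t ^ 2‖ ≤ M * (t ^ 2)⁻¹ := fun t _ => by
    rw [norm_div, norm_pow, Real.norm_eq_abs, Real.norm_eq_abs, sq_abs, div_eq_mul_inv]
    gcongr
    exact hM t
  have hM0 : 0 ≤ M := (abs_nonneg _).trans (hM 0)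
  calc |∫ t in Ioi a, f t / t ^ 2| ≤ ∫ t in Ioi a, M * (t ^ 2)⁻¹ :=
        norm_integral_le_of_norm_le ((integrableOn_Ioi_inv_sq ha).const_mul M)
          ((ae_restrict_iff' measurableSet_Ioi).mpr (ae_of_all _ hbound))
    _ = M / a := by rw [integral_const_mul, integral_Ioi_inv_sq ha, div_eq_mul_inv]

lemma integrableOn_fract_mul_fract_div_sq {l : ℝ} (hl : 0 < l) :
    IntegrableOn (fun t => Int.fract t * Int.fract (l * t) / t ^ 2) (Ioi 0) := by
  rw [← Ioc_union_Ioi_eq_Ioi zero_le_one]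
  refine IntegrableOn.union ?_
    (integrableOn_Ioi_div_sq one_pos (by fun_prop) fun t => abs_fract_mul_fract_le_one t (l * t))
  refine Measure.integrableOn_of_bounded (M := l) measure_Ioc_lt_top.ne
    (by fun_prop : Measurable _).aestronglyMeasurable ?_
  filter_upwards [ae_restrict_mem measurableSet_Ioc] with t ht
  -- `{t}{lt} ≤ t · lt`
  have h1 := fract_le_self_of_nonneg ht.1.le
  have h2 := fract_le_self_of_nonneg (mul_pos hl ht.1).le
  rw [Real.norm_eq_abs, abs_of_nonneg (by positivity), div_le_iff₀ (pow_pos ht.1 2)]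
  calc _ ≤ t * (l * t) := mul_le_mul h1 h2 (Int.fract_nonneg _) ht.1.le
    _ = l * t ^ 2 := by ring

lemma integrableOn_fract_div_sq : IntegrableOn (fun u : ℝ => Int.fract u / u ^ 2) (Ioi 1) :=
  integrableOn_Ioi_div_sq one_pos measurable_fract abs_fract_le_one

lemma integrableOn_sawtoothPrimitive_div_sq {a : ℝ} (ha : 0 < a) :
    IntegrableOn (fun t => sawtoothPrimitive t / t ^ 2) (Ioi a) :=
  integrableOn_Ioi_div_sq ha continuous_sawtoothPrimitive.measurable abs_sawtoothPrimitive_le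

lemma integral_fract_div_eq {X : ℝ} (hX : 1 ≤ X) :
    ∫ t in (1)..X, Int.fract t / t =
      log X / 2 + sawtoothPrimitive X / X + ∫ t in (1)..X, sawtoothPrimitive t / t ^ 2 := by
  have hpos : ∀ t ∈ Icc 1 X, t ≠ 0 := fun t ht => (one_pos.trans_le ht.1).ne'
  have hfract : IntervalIntegrable (fun t => Int.fract t / t) volume 1 X := by
    simp_rw [div_eq_mul_inv]
    exact (intervalIntegrable_fract 1 X).mul_continuousOn
      (continuousOn_inv₀.mono fun t ht => hpos t (by rwa [uIcc_of_le hX] at ht))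
  have hG : IntervalIntegrable (fun t => sawtoothPrimitive t / t ^ 2) volume 1 X := by
    refine ContinuousOn.intervalIntegrable ?_
    rw [uIcc_of_le hX]
    exact continuous_sawtoothPrimitive.continuousOn.div (by fun_prop)
      fun t ht => pow_ne_zero 2 (hpos t ht)
  have hFTC := intervalIntegral.integral_eq_sub_of_hasDeriv_right_of_le hX
    (f := fun t => log t / 2 + sawtoothPrimitive t / t)
    (f' := fun t => Int.fract t / t - sawtoothPrimitive t / t ^ 2)
    ((continuousOn_log.mono fun t ht => hpos t ht).div_const 2 |>.add <|
      continuous_sawtoothPrimitive.continuousOn.div continuousOn_id hpos)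
    (fun t ht => by
      have ht0 := hpos t (Ioo_subset_Icc_self ht)
      refine (((hasDerivAt_log ht0).div_const 2).hasDerivWithinAt.add
        ((hasDerivWithinAt_sawtoothPrimitive t).div (hasDerivWithinAt_id t _) ht0)).congr_deriv ?_
      simp only [id]
      field_simp
      ring)
    (hfract.sub hG)
  rw [intervalIntegral.integral_sub hfract hG] at hFTC
  simp only [log_one, sawtoothPrimitive, Int.fract_one] at hFTC ⊢
  linarith

lemma abs_integral_fract_div_sub_log_le {X : ℝ} (hX : 1 ≤ X) :
    |(∫ t in (1)..X, Int.fract t / t)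
        - (log X / 2 + ∫ t in Ioi 1, sawtoothPrimitive t / t ^ 2)| ≤ 1 / (4 * X) := by
  have hX0 : 0 < X := one_pos.trans_le hX
  rw [integral_fract_div_eq hX, ← intervalIntegral.integral_interval_add_Ioi
    (integrableOn_sawtoothPrimitive_div_sq one_pos) (integrableOn_sawtoothPrimitive_div_sq hX0)]
  have hboundary : |sawtoothPrimitive X / X| ≤ 1 / 8 / X := by
    rw [abs_div, abs_of_pos hX0]
    exact div_le_div_of_nonneg_right (abs_sawtoothPrimitive_le X) hX0.le
  have htail := abs_integral_Ioi_div_sq_le hX0 abs_sawtoothPrimitive_le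
  calc _ = |sawtoothPrimitive X / X - ∫ t in Ioi X, sawtoothPrimitive t / t ^ 2| := by ring_nf
    _ ≤ 1 / 8 / X + 1 / 8 / X := (abs_sub _ _).trans (add_le_add hboundary htail)
    _ = 1 / (4 * X) := by ring

lemma abs_intervalIntegral_mul_le_of_primitive_bounded {ψ ψ' Φ φ : ℝ → ℝ} {a b M K : ℝ}
    (hab : a ≤ b) (hψ : ContinuousOn ψ (Icc a b)) (hΦ : ContinuousOn Φ (Icc a b))
    (hψψ' : ∀ x ∈ Ioo a b, HasDerivAt ψ (ψ' x) x)
    (hΦφ : ∀ x ∈ Ioo a b, HasDerivWithinAt Φ (φ x) (Ioi x) x)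
    (hψ' : IntervalIntegrable ψ' volume a b) (hφ : IntervalIntegrable φ volume a b)
    (hΦM : ∀ x ∈ Icc a b, |Φ x| ≤ M) (hψ'K : ∀ x ∈ Icc a b, |ψ' x| ≤ K) :
    |∫ x in a..b, ψ x * φ x| ≤ M * (|ψ a| + |ψ b| + K * (b - a)) := by
  rw [← uIcc_of_le hab] at hψ hΦ
  have hIoo : Ioo (min a b) (max a b) = Ioo a b := by rw [min_eq_left hab, max_eq_right hab]
  rw [intervalIntegral.integral_mul_deriv_eq_deriv_mul_of_hasDeriv_right hψ hΦ
    (fun x hx => (hψψ' x (hIoo ▸ hx)).hasDerivWithinAt) (fun x hx => hΦφ x (hIoo ▸ hx)) hψ' hφ]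
  have hremainder : |∫ x in a..b, ψ' x * Φ x| ≤ K * M * |b - a| := by
    refine intervalIntegral.norm_integral_le_of_norm_le_const (f := fun x => ψ' x * Φ x)
      fun x hx => ?_
    rw [uIoc_of_le hab] at hx
    rw [Real.norm_eq_abs, abs_mul]
    exact mul_le_mul (hψ'K x (Ioc_subset_Icc_self hx)) (hΦM x (Ioc_subset_Icc_self hx))
      (abs_nonneg _) ((abs_nonneg _).trans (hψ'K x (Ioc_subset_Icc_self hx)))
  have hψΦ : ∀ x ∈ Icc a b, |ψ x * Φ x| ≤ |ψ x| * M := fun x hx => by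
    rw [abs_mul]; exact mul_le_mul_of_nonneg_left (hΦM x hx) (abs_nonneg _)
  rw [abs_of_nonneg (sub_nonneg.mpr hab)] at hremainder
  calc _ ≤ |ψ b * Φ b| + |ψ a * Φ a| + |∫ x in a..b, ψ' x * Φ x| :=
        (abs_sub _ _).trans (add_le_add_left (abs_sub _ _) _)
    _ ≤ |ψ b| * M + |ψ a| * M + K * M * (b - a) := by
      gcongr
      exacts [hψΦ b (right_mem_Icc.mpr hab), hψΦ a (left_mem_Icc.mpr hab)]
    _ = M * (|ψ a| + |ψ b| + K * (b - a)) := by ring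

lemma hasDerivAt_sub_div_sq (a : ℝ) {u : ℝ} (hu : u ≠ 0) :
    HasDerivAt (fun u => (u - a) / u ^ 2) ((2 * a - u) / u ^ 3) u := by
  refine (((hasDerivAt_id' u).sub_const a).div (hasDerivAt_pow 2 u)
    (pow_ne_zero 2 hu)).congr_deriv ?_
  field_simp
  ring

lemma abs_intervalIntegral_mul_sawtooth_le {l a : ℝ} (hl : 0 < l) (ha : 1 ≤ a) :
    |∫ u in a..a + 1, (u - a) / u ^ 2 * (Int.fract (u / l) - 1 / 2)| ≤ l / (4 * a ^ 2) := by
  have ha0 : 0 < a := one_pos.trans_le ha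
  have hpos : ∀ u ∈ Icc a (a + 1), u ≠ 0 := fun u hu => (ha0.trans_le hu.1).ne'
  have hψ : ContinuousOn (fun u => (u - a) / u ^ 2) (Icc a (a + 1)) :=
    (by fun_prop : ContinuousOn (fun u => u - a) _).div (by fun_prop)
      fun u hu => pow_ne_zero 2 (hpos u hu)
  have hψ' : IntervalIntegrable (fun u => (2 * a - u) / u ^ 3) volume a (a + 1) := by
    refine ContinuousOn.intervalIntegrable ?_
    rw [uIcc_of_le (by linarith)]
    exact (by fun_prop : ContinuousOn (fun u => 2 * a - u) _).div (by fun_prop)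
      fun u hu => pow_ne_zero 3 (hpos u hu)
  have hφ : IntervalIntegrable (fun u => Int.fract (u / l) - 1 / 2) volume a (a + 1) :=
    intervalIntegrable_const.mono_fun' (by fun_prop : Measurable _).aestronglyMeasurable
      (ae_of_all _ fun u => abs_fract_sub_half_le (u / l))
  have hΦM : ∀ u, |l * sawtoothPrimitive (u / l)| ≤ l / 8 := fun u => by
    rw [abs_mul, abs_of_pos hl]
    linarith [mul_le_mul_of_nonneg_left (abs_sawtoothPrimitive_le (u / l)) hl.le]
  have hψ'K : ∀ u ∈ Icc a (a + 1), |(2 * a - u) / u ^ 3| ≤ 1 / a ^ 2 := fun u hu => by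
    have hnum : |2 * a - u| ≤ a := abs_le.mpr ⟨by linarith [hu.2], by linarith [hu.1]⟩
    calc |(2 * a - u) / u ^ 3| = |2 * a - u| / u ^ 3 := by
          rw [abs_div, abs_of_pos (pow_pos (ha0.trans_le hu.1) 3)]
      _ ≤ a / a ^ 3 := div_le_div₀ ha0.le hnum (pow_pos ha0 3) (pow_le_pow_left₀ ha0.le hu.1 3)
      _ = 1 / a ^ 2 := by field_simp
  have hend : |1 / (a + 1) ^ 2| ≤ 1 / a ^ 2 := by
    rw [abs_of_pos (by positivity)]
    gcongr
    linarith
  refine (abs_intervalIntegral_mul_le_of_primitive_bounded (by linarith) hψ (by fun_prop)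
    (fun u hu => hasDerivAt_sub_div_sq a (hpos u (Ioo_subset_Icc_self hu)))
    (fun u _ => hasDerivWithinAt_mul_sawtoothPrimitive_div hl u) hψ' hφ (fun u _ => hΦM u)
    hψ'K).trans ?_
  rw [sub_self, zero_div, abs_zero, add_sub_cancel_left]
  calc l / 8 * (0 + |1 / (a + 1) ^ 2| + 1 / a ^ 2 * 1)
      ≤ l / 8 * (0 + 1 / a ^ 2 + 1 / a ^ 2 * 1) := by gcongr
    _ = l / (4 * a ^ 2) := by ring

lemma abs_integral_Ico_fract_mul_sawtooth_le {l : ℝ} (hl : 0 < l) {n : ℕ} (hn : 1 ≤ n) :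
    |∫ u in Ico (n : ℝ) (n + 1), Int.fract u * (Int.fract (u / l) - 1 / 2) / u ^ 2|
      ≤ l / (4 * n ^ 2) := by
  -- on `[n, n + 1)` the integrand has the smooth factor `(u - n) / u ^ 2`
  have hsmooth : ∫ u in Ico (n : ℝ) (n + 1), Int.fract u * (Int.fract (u / l) - 1 / 2) / u ^ 2
      = ∫ u in (n : ℝ)..n + 1, (u - n) / u ^ 2 * (Int.fract (u / l) - 1 / 2) := by
    rw [intervalIntegral.integral_of_le (by linarith), ← integral_Ico_eq_integral_Ioc]
    refine setIntegral_congr_fun measurableSet_Ico fun u hu => ?_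
    have hfloor : (⌊u⌋ : ℝ) = n := by
      simpa using Int.floor_eq_on_Ico' (n : ℤ) u (by simpa using hu)
    rw [← Int.self_sub_floor, hfloor]
    ring
  rw [hsmooth]
  exact abs_intervalIntegral_mul_sawtooth_le hl (by exact_mod_cast hn)

lemma iUnion_Ico_natCast_succ :
    ⋃ k : ℕ, Ico (((k + 1 : ℕ) : ℝ)) ((k + 1 : ℕ) + 1) = Ici 1 := by
  ext x
  simp only [mem_iUnion, mem_Ico, mem_Ici]
  constructor
  · rintro ⟨k, hk, -⟩
    exact le_trans (by simp) hk
  · intro hx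
    refine ⟨⌊x⌋₊ - 1, ?_⟩
    rw [Nat.sub_add_cancel ((Nat.one_le_floor_iff x).mpr hx)]
    exact ⟨Nat.floor_le (by linarith), Nat.lt_floor_add_one x⟩

lemma pairwise_disjoint_Ico_natCast_succ :
    Pairwise (Function.onFun Disjoint fun k : ℕ => Ico (((k + 1 : ℕ) : ℝ)) ((k + 1 : ℕ) + 1)) := by
  have := (pairwise_disjoint_Ico_intCast (α := ℝ)).comp_of_injective
    (f := fun k : ℕ => ((k + 1 : ℕ) : ℤ)) (fun i j h => by simpa using h)
  exact fun i j hij => by simpa using this hij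

lemma hasSum_inv_succ_sq : HasSum (fun k : ℕ => 1 / ((k + 1 : ℕ) : ℝ) ^ 2) (π ^ 2 / 6) := by
  simpa using (hasSum_nat_add_iff' 1).mpr hasSum_zeta_two

lemma abs_integral_fract_mul_sawtooth_le {l : ℝ} (hl : 0 < l) :
    |∫ u in Ioi 1, Int.fract u * (Int.fract (u / l) - 1 / 2) / u ^ 2| ≤ π ^ 2 / 24 * l := by
  have hint : IntegrableOn (fun u => Int.fract u * (Int.fract (u / l) - 1 / 2) / u ^ 2)
      (⋃ k : ℕ, Ico (((k + 1 : ℕ) : ℝ)) ((k + 1 : ℕ) + 1)) := by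
    rw [iUnion_Ico_natCast_succ, integrableOn_Ici_iff_integrableOn_Ioi]
    refine integrableOn_Ioi_div_sq (M := 1) one_pos (by fun_prop) fun u => ?_
    rw [abs_mul]
    exact mul_le_one₀ (abs_fract_le_one u) (abs_nonneg _)
      ((abs_fract_sub_half_le _).trans (by norm_num))
  have hsum := hasSum_integral_iUnion (fun _ => measurableSet_Ico)
    pairwise_disjoint_Ico_natCast_succ hint
  rw [iUnion_Ico_natCast_succ, integral_Ici_eq_integral_Ioi] at hsum
  have hzeta := hasSum_inv_succ_sq.mul_left (l / 4)
  rw [show l / 4 * (π ^ 2 / 6) = π ^ 2 / 24 * l by ring] at hzeta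
  exact hsum.norm_le_of_bounded hzeta fun k =>
    (abs_integral_Ico_fract_mul_sawtooth_le hl (Nat.succ_pos k)).trans_eq (by ring)

lemma integral_Ioi_inv_fract_mul_fract {l : ℝ} (hl : 0 < l) :
    ∫ t in Ioi l⁻¹, Int.fract t * Int.fract (l * t) / t ^ 2
      = l * ∫ u in Ioi 1, Int.fract u * Int.fract (u / l) / u ^ 2 := by
  have ht0 : ∀ t ∈ Ioi l⁻¹, t ≠ 0 := fun t ht => ((inv_pos.mpr hl).trans ht).ne'
  calc _ = ∫ t in Ioi l⁻¹, l ^ 2 * (Int.fract (l * t) * Int.fract (l * t / l) / (l * t) ^ 2) :=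
        setIntegral_congr_fun measurableSet_Ioi fun t ht => by
          rw [mul_div_cancel_left₀ t hl.ne']
          field_simp [ht0 t ht]
    _ = l⁻¹ * ∫ u in Ioi 1, l ^ 2 * (Int.fract u * Int.fract (u / l) / u ^ 2) := by
        rw [integral_comp_mul_left_Ioi
          (fun u => l ^ 2 * (Int.fract u * Int.fract (u / l) / u ^ 2)) l⁻¹ hl,
          mul_inv_cancel₀ hl.ne', smul_eq_mul]
    _ = _ := by
        rw [integral_const_mul]
        field_simp

lemma A_eq {l : ℝ} (hl : 0 < l) (hl1 : l ≤ 1) :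
    A l = l + l * (∫ t in (1)..l⁻¹, Int.fract t / t)
        + l * ∫ u in Ioi 1, Int.fract u * Int.fract (u / l) / u ^ 2 := by
  have hX : 1 ≤ l⁻¹ := (one_le_inv₀ hl).mpr hl1
  have hint := integrableOn_fract_mul_fract_div_sq hl
  -- below `1 / l` there is no wrap-around: `{l t} = l t`
  have hsmall : ∀ t ∈ Ioo 0 l⁻¹,
      Int.fract t * Int.fract (l * t) / t ^ 2 = l * (Int.fract t / t) := fun t ht => by
    have hlt : l * t < 1 := by simpa [hl.ne'] using mul_lt_mul_of_pos_left ht.2 hl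
    rw [Int.fract_eq_self.mpr ⟨(mul_pos hl ht.1).le, hlt⟩]
    field_simp [ht.1.ne']
  have hhead : ∫ t in (0)..1, Int.fract t * Int.fract (l * t) / t ^ 2 = l := by
    rw [intervalIntegral.integral_congr_Ioo_of_le zero_le_one (g := fun _ => l)
      fun t ht => by
        rw [hsmall t ⟨ht.1, ht.2.trans_le hX⟩, Int.fract_eq_self.mpr ⟨ht.1.le, ht.2⟩,
          div_self ht.1.ne', mul_one]]
    simp
  have hmid : ∫ t in (1)..l⁻¹, Int.fract t * Int.fract (l * t) / t ^ 2
      = l * ∫ t in (1)..l⁻¹, Int.fract t / t := by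
    rw [← intervalIntegral.integral_const_mul]
    exact intervalIntegral.integral_congr_Ioo_of_le hX
      fun t ht => hsmall t ⟨one_pos.trans ht.1, ht.2⟩
  rw [A, ← intervalIntegral.integral_interval_add_Ioi hint
      (hint.mono_set (Ioi_subset_Ioi zero_le_one)),
    ← intervalIntegral.integral_interval_add_Ioi (hint.mono_set (Ioi_subset_Ioi zero_le_one))
      (hint.mono_set (Ioi_subset_Ioi (inv_pos.mpr hl).le)),
    hhead, hmid, integral_Ioi_inv_fract_mul_fract hl, add_assoc]

lemma A_one : A 1 = 1 + 2 * (∫ t in Ioi 1, sawtoothPrimitive t / t ^ 2)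
    + ∫ t in Ioi 1, Int.fract t / t ^ 2 := by
  rw [A_eq one_pos le_rfl, inv_one, intervalIntegral.integral_same, mul_zero, one_mul, add_zero,
    add_assoc, ← integral_const_mul, ← integral_add
      ((integrableOn_sawtoothPrimitive_div_sq one_pos).const_mul 2) integrableOn_fract_div_sq]
  congr 1
  refine setIntegral_congr_fun measurableSet_Ioi fun t _ => ?_
  rw [div_one, sawtoothPrimitive]
  ring

lemma abs_integral_fract_mul_fract_div_sq_sub_le {l : ℝ} (hl : 0 < l) :
    |(∫ u in Ioi 1, Int.fract u * Int.fract (u / l) / u ^ 2)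
        - (∫ u in Ioi 1, Int.fract u / u ^ 2) / 2| ≤ π ^ 2 / 24 * l := by
  rw [← integral_div, ← integral_sub (integrableOn_Ioi_div_sq one_pos (by fun_prop)
    fun u => abs_fract_mul_fract_le_one u (u / l)) (integrableOn_fract_div_sq.div_const 2)]
  convert abs_integral_fract_mul_sawtooth_le hl using 4 with u
  ring

theorem A_integrable_and_asymptotics :
    (∀ l : ℝ, 0 < l →
      IntegrableOn (fun t => Int.fract t * Int.fract (l * t) / t ^ 2) (Ioi 0)) ∧
    ∃ C > 0, ∃ δ > 0, ∀ l : ℝ, 0 < l → l ≤ δ →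
      |A l - (l / 2 * Real.log (1 / l) + (1 + A 1) / 2 * l)| ≤ C * l ^ 2 := by
  refine ⟨fun l hl => integrableOn_fract_mul_fract_div_sq hl,
    π ^ 2 / 24 + 1 / 4, by positivity, 1, one_pos, fun l hl hl1 => ?_⟩
  have hlog := abs_integral_fract_div_sub_log_le ((one_le_inv₀ hl).mpr hl1)
  have htail := abs_integral_fract_mul_fract_div_sq_sub_le hl
  rw [one_div, A_eq hl hl1, A_one]
  set I := ∫ t in (1)..l⁻¹, Int.fract t / t
  set T := ∫ u in Ioi 1, Int.fract u * Int.fract (u / l) / u ^ 2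
  set c := ∫ t in Ioi (1 : ℝ), sawtoothPrimitive t / t ^ 2
  set d := ∫ t in Ioi (1 : ℝ), Int.fract t / t ^ 2
  calc _ = |l * (I - (log l⁻¹ / 2 + c)) + l * (T - d / 2)| := by ring_nf
    _ ≤ l * (1 / (4 * l⁻¹)) + l * (π ^ 2 / 24 * l) := by
      refine (abs_add_le _ _).trans ?_
      rw [abs_mul, abs_mul, abs_of_pos hl]
      gcongr
    _ = (π ^ 2 / 24 + 1 / 4) * l ^ 2 := by field_simp; ring
end

section
/- The constant A(1) = ∫_0^∞ {t}²/t² dt equals log(2π) − γ, where γ is the Euler–Mascheroni constant. -/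
open MeasureTheory Set Real Filter
open scoped Topology Nat

/-!
On `(n, n + 1)` the integrand is `(t - n)² / t²`, with antiderivative `t - n (2 log t + n / t)`.
Summing over `n < N` telescopes to `∫₀ᴺ {t}²/t² dt = 2N - H_N + 2 log N! - 2N log N`, and by
Stirling's formula `log N! = N log N - N + ½ log (2πN) + o(1)` this equals
`log (2π) - (H_N - log N) + o(1)`, which tends to `log (2π) - γ`. Integrability on `(0, ∞)`
comes for free: the integrand is nonnegative and these partial integrals converge.
-/

theorem Int.fract_eq_sub_natCast {R : Type*} [Ring R] [LinearOrder R] [IsStrictOrderedRing R]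
    [FloorRing R] {t : R} {n : ℕ} (ht : t ∈ Ico (n : R) (n + 1)) :
    Int.fract t = t - n :=
  Int.fract_eq_iff.2 ⟨sub_nonneg.2 ht.1, sub_lt_iff_lt_add'.2 ht.2, n, by simp⟩

theorem fract_sq_div_sq_le_one {t : ℝ} (ht : 0 ≤ t) : Int.fract t ^ 2 / t ^ 2 ≤ 1 := by
  have hfloor : (0 : ℝ) ≤ ⌊t⌋ := by exact_mod_cast Int.floor_nonneg.2 ht
  have hfract : Int.fract t ≤ t := by rw [Int.fract]; linarith
  exact div_le_one_of_le₀ (pow_le_pow_left₀ (Int.fract_nonneg t) hfract 2) (by positivity)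

theorem integrableOn_fract_sq_div_sq_Ioc {a b : ℝ} (ha : 0 ≤ a) :
    IntegrableOn (fun t : ℝ => Int.fract t ^ 2 / t ^ 2) (Ioc a b) := by
  refine Measure.integrableOn_of_bounded (M := 1) measure_Ioc_lt_top.ne
    ((measurable_fract.pow_const 2).div (measurable_id.pow_const 2)).aestronglyMeasurable ?_
  filter_upwards [ae_restrict_mem measurableSet_Ioc] with t ht
  rw [Real.norm_of_nonneg (by positivity)]
  exact fract_sq_div_sq_le_one (ha.trans ht.1.le)

theorem intervalIntegrable_fract_sq_div_sq {a b : ℝ} (ha : 0 ≤ a) (hb : 0 ≤ b) :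
    IntervalIntegrable (fun t : ℝ => Int.fract t ^ 2 / t ^ 2) volume a b :=
  ⟨integrableOn_fract_sq_div_sq_Ioc ha, integrableOn_fract_sq_div_sq_Ioc hb⟩

theorem hasDerivAt_fract_sq_div_sq_antideriv (n : ℕ) {t : ℝ}
    (ht : t ∈ Ioo (n : ℝ) (n + 1)) :
    HasDerivAt (fun s => s - n * (2 * log s + n / s)) (Int.fract t ^ 2 / t ^ 2) t := by
  have ht0 : t ≠ 0 := (lt_of_le_of_lt n.cast_nonneg ht.1).ne'
  have h : HasDerivAt (fun s => s - n * (2 * log s + n / s))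
      (1 - n * (2 * t⁻¹ + n * -(t ^ 2)⁻¹)) t := by
    simpa only [div_eq_mul_inv] using (hasDerivAt_id' t).fun_sub
      ((((hasDerivAt_log ht0).const_mul 2).fun_add
        ((hasDerivAt_inv ht0).const_mul (n : ℝ))).const_mul (n : ℝ))
  rw [Int.fract_eq_sub_natCast (Ioo_subset_Ico_self ht)]
  convert h using 1
  field_simp
  ring

noncomputable def fractSqIntegralClosedForm (N : ℕ) : ℝ :=
  2 * N - harmonic N + 2 * log N ! - 2 * N * log N

theorem integral_fract_sq_div_sq_nat_succ (n : ℕ) :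
    ∫ t in (n : ℝ)..(n + 1), Int.fract t ^ 2 / t ^ 2 =
      fractSqIntegralClosedForm (n + 1) - fractSqIntegralClosedForm n := by
  have hcont : ContinuousOn (fun s => s - n * (2 * log s + n / s)) (Icc (n : ℝ) (n + 1)) := by
    rcases n.eq_zero_or_pos with rfl | hn
    · simpa using continuousOn_id' _
    · have : ∀ s ∈ Icc (n : ℝ) (n + 1), s ≠ 0 := fun s hs =>
        (lt_of_lt_of_le (Nat.cast_pos.2 hn) hs.1).ne'
      fun_prop (disch := assumption)
  rw [intervalIntegral.integral_eq_sub_of_hasDerivAt_of_le (by linarith) hcont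
    (fun t ht => hasDerivAt_fract_sq_div_sq_antideriv n ht)
    (intervalIntegrable_fract_sq_div_sq n.cast_nonneg (by positivity))]
  have hn_div : (n : ℝ) * (n / n) = n := by
    rcases eq_or_ne (n : ℝ) 0 with h | h <;> simp [h]
  have hlog_fact : log (n + 1)! = log (n + 1) + log n ! := by
    rw [Nat.factorial_succ, Nat.cast_mul, log_mul (by positivity) (by positivity)]
    push_cast
    ring
  simp only [fractSqIntegralClosedForm, harmonic_succ, hlog_fact, mul_add, hn_div]
  push_cast
  field_simp
  ring

theorem integral_fract_sq_div_sq_zero_nat (N : ℕ) :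
    ∫ t in (0 : ℝ)..N, Int.fract t ^ 2 / t ^ 2 = fractSqIntegralClosedForm N := by
  rw [← Nat.cast_zero, ← intervalIntegral.sum_integral_adjacent_intervals
    (fun k _ => intervalIntegrable_fract_sq_div_sq k.cast_nonneg (k + 1).cast_nonneg)]
  simp only [Nat.cast_succ, integral_fract_sq_div_sq_nat_succ]
  rw [Finset.sum_range_sub, fractSqIntegralClosedForm, fractSqIntegralClosedForm]
  simp

theorem tendsto_fractSqIntegralClosedForm :
    Tendsto fractSqIntegralClosedForm atTop (𝓝 (log (2 * π) - eulerMascheroniConstant)) := by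
  have hstirling : Tendsto (fun N : ℕ => log (Stirling.stirlingSeq N)) atTop (𝓝 (log √π)) :=
    ((continuousAt_log (by positivity)).tendsto).comp Stirling.tendsto_stirlingSeq_sqrt_pi
  have hlim : 2 * log √π + log 2 = log (2 * π) := by
    rw [log_sqrt pi_pos.le, log_mul two_ne_zero pi_ne_zero]
    ring
  rw [← hlim]
  refine (((hstirling.const_mul 2).add_const (log 2)).sub tendsto_harmonic_sub_log).congr' ?_
  filter_upwards [eventually_ne_atTop 0] with N hN
  have hN : (N : ℝ) ≠ 0 := Nat.cast_ne_zero.2 hN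
  rw [Stirling.log_stirlingSeq_formula, log_mul two_ne_zero hN, log_div hN (exp_ne_zero 1),
    log_exp, fractSqIntegralClosedForm]
  ring

theorem integrableOn_fract_sq_div_sq_Ioi :
    IntegrableOn (fun t : ℝ => Int.fract t ^ 2 / t ^ 2) (Ioi 0) := by
  refine integrableOn_Ioi_of_intervalIntegral_norm_tendsto _ 0
    (fun N => integrableOn_fract_sq_div_sq_Ioc le_rfl) tendsto_natCast_atTop_atTop
    (tendsto_fractSqIntegralClosedForm.congr fun N => ?_)
  simp only [Real.norm_of_nonneg (div_nonneg (sq_nonneg _) (sq_nonneg _)),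
    integral_fract_sq_div_sq_zero_nat]

theorem A_one_eq :
    (∫ t in Ioi (0:ℝ), (Int.fract t) ^ 2 / t ^ 2) =
      Real.log (2 * Real.pi) - Real.eulerMascheroniConstant := by
  have h := intervalIntegral_tendsto_integral_Ioi 0 integrableOn_fract_sq_div_sq_Ioi
    tendsto_natCast_atTop_atTop
  simp only [integral_fract_sq_div_sq_zero_nat] at h
  exact tendsto_nhds_unique h tendsto_fractSqIntegralClosedForm
end

section
/- An irrational x ∈ (0,1) is a Wilton number if and only if α(x) is a Wilton number, and in that case the Wilton function satisfies the functional equation W(x) = log(1/x) − x·W(α(x)). -/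
/-!
Since `γ_{k+1}(x) = x · γ_k(α(x))` and `γ_0(x) = log(1/x)`, the partial sums satisfy
`s_{N+1}(x) = log(1/x) − x · s_N(α(x))`. For `x ≠ 0` the affine map `y ↦ log(1/x) − x y` is a
homeomorphism of `ℝ`, so one sequence of partial sums converges iff the other does, and the
limits are related by the same map.
-/

open Filter Topology

/-- Iterates of the Gauss map: `α₀(x) = x`, `α_k(x) = {1/α_{k-1}(x)}`. -/
noncomputable def alphaIter (x : ℝ) (k : ℕ) : ℝ := (fun y => Int.fract y⁻¹)^[k] x

/-- `γ_k(x) = β_{k-1}(x) log(1/α_k(x))` where `β_{k-1}(x) = α₀(x)⋯α_{k-1}(x)`. -/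
noncomputable def gammaTerm (x : ℝ) (k : ℕ) : ℝ :=
  (∏ i ∈ Finset.range k, alphaIter x i) * Real.log (1 / alphaIter x k)

/-- `x` is a Wilton number if `Σ_{k≥0} (−1)^k γ_k(x)` converges. -/
def IsWilton (x : ℝ) : Prop :=
  ∃ S : ℝ, Tendsto (fun N => ∑ k ∈ Finset.range N, (-1 : ℝ) ^ k * gammaTerm x k) atTop (nhds S)

lemma alphaIter_zero (x : ℝ) : alphaIter x 0 = x := rfl

lemma alphaIter_succ (x : ℝ) (k : ℕ) :
    alphaIter x (k + 1) = alphaIter (Int.fract x⁻¹) k := by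
  simp only [alphaIter, Function.iterate_succ_apply]

lemma gammaTerm_zero (x : ℝ) : gammaTerm x 0 = Real.log (1 / x) := by
  simp [gammaTerm, alphaIter_zero]

lemma gammaTerm_succ (x : ℝ) (k : ℕ) :
    gammaTerm x (k + 1) = x * gammaTerm (Int.fract x⁻¹) k := by
  simp only [gammaTerm, Finset.prod_range_succ', alphaIter_succ, alphaIter_zero]
  ring

noncomputable def wiltonPartialSum (x : ℝ) (N : ℕ) : ℝ :=
  ∑ k ∈ Finset.range N, (-1 : ℝ) ^ k * gammaTerm x k

lemma wiltonPartialSum_succ (x : ℝ) (N : ℕ) :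
    wiltonPartialSum x (N + 1) = Real.log (1 / x) - x * wiltonPartialSum (Int.fract x⁻¹) N := by
  simp only [wiltonPartialSum, Finset.sum_range_succ', gammaTerm_succ, gammaTerm_zero, pow_zero,
    one_mul]
  rw [Finset.mul_sum, sub_eq_neg_add, ← Finset.sum_neg_distrib]
  exact congrArg (· + _) (Finset.sum_congr rfl fun k _ => by ring)

lemma tendsto_const_sub_mul_iff {ι : Type*} {l : Filter ι} {f : ι → ℝ} (c : ℝ) {a : ℝ}
    (ha : a ≠ 0) (y : ℝ) :
    Tendsto (fun n => c - a * f n) l (𝓝 (c - a * y)) ↔ Tendsto f l (𝓝 y) :=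
  ((Homeomorph.mulLeft₀ a ha).trans (Homeomorph.subLeft c)).isInducing.tendsto_nhds_iff.symm

lemma tendsto_wiltonPartialSum_iff {x : ℝ} (hx : x ≠ 0) (S' : ℝ) :
    Tendsto (wiltonPartialSum x) atTop (𝓝 (Real.log (1 / x) - x * S')) ↔
      Tendsto (wiltonPartialSum (Int.fract x⁻¹)) atTop (𝓝 S') := by
  rw [← tendsto_add_atTop_iff_nat 1, funext (wiltonPartialSum_succ x)]
  exact tendsto_const_sub_mul_iff _ hx S'

theorem wilton_iff_and_functional_equation_general (x : ℝ) (hx : x ∈ Set.Ioo (0:ℝ) 1) :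
    (IsWilton x ↔ IsWilton (Int.fract x⁻¹)) ∧
    (∀ S S' : ℝ,
      Tendsto (fun N => ∑ k ∈ Finset.range N, (-1 : ℝ) ^ k * gammaTerm x k) atTop (nhds S) →
      Tendsto (fun N => ∑ k ∈ Finset.range N, (-1 : ℝ) ^ k * gammaTerm (Int.fract x⁻¹) k)
        atTop (nhds S') →
      S = Real.log (1 / x) - x * S') := by
  have hx0 : x ≠ 0 := hx.1.ne'
  refine ⟨⟨fun ⟨S, hS⟩ => ?_, fun ⟨S', hS'⟩ => ?_⟩, fun S S' hS hS' => ?_⟩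
  · have hS_eq : S = Real.log (1 / x) - x * ((Real.log (1 / x) - S) / x) := by
      field_simp; ring
    rw [hS_eq] at hS
    exact ⟨_, (tendsto_wiltonPartialSum_iff hx0 _).mp hS⟩
  · exact ⟨_, (tendsto_wiltonPartialSum_iff hx0 S').mpr hS'⟩
  · exact tendsto_nhds_unique hS ((tendsto_wiltonPartialSum_iff hx0 S').mpr hS')

theorem wilton_iff_and_functional_equation (x : ℝ) (hx : x ∈ Set.Ioo (0:ℝ) 1)
    (hirr : Irrational x) :
    (IsWilton x ↔ IsWilton (Int.fract x⁻¹)) ∧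
    (∀ S S' : ℝ,
      Tendsto (fun N => ∑ k ∈ Finset.range N, (-1 : ℝ) ^ k * gammaTerm x k) atTop (nhds S) →
      Tendsto (fun N => ∑ k ∈ Finset.range N, (-1 : ℝ) ^ k * gammaTerm (Int.fract x⁻¹) k)
        atTop (nhds S') →
      S = Real.log (1 / x) - x * S') :=
  wilton_iff_and_functional_equation_general x hx
end

section
/- Let K > 0 be real and suppose |R| ≤ B/K with B a constant and K large enough that B/K < 1/2. Then the tail of the binomial series satisfies |Σ_{j > ⌊K⌋} C(K,j) R^j| ≤ 2^{K+1} · (B/K)^{K−1} / (1 − B/K), which is O(exp(−K)) as K → ∞ for fixed B. -/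
/-- The generalized binomial coefficient `C(K,j) = K(K−1)⋯(K−j+1)/j!`. -/
noncomputable def rbinom (K : ℝ) (j : ℕ) : ℝ :=
  (∏ i ∈ Finset.range j, (K - i)) / (Nat.factorial j)

lemma rbinom_succ (K : ℝ) (j : ℕ) :
    rbinom K (j + 1) = rbinom K j * (K - j) / (j + 1) := by
  unfold rbinom
  rw [Finset.prod_range_succ, Nat.factorial_succ, div_mul_eq_mul_div, div_div]
  push_cast
  rw [mul_comm ((j:ℝ) + 1)]

lemma abs_rbinom_le_one (K : ℝ) (hK : 0 < K) (h : ℕ) :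
    |rbinom K (⌊K⌋₊ + 1 + h)| ≤ 1 := by
  set n := ⌊K⌋₊ with hn
  have hKn : (n : ℝ) ≤ K := Nat.floor_le hK.le
  have hKn1 : K < (n : ℝ) + 1 := Nat.lt_floor_add_one K
  induction h with
  | zero =>
    show |rbinom K (n + 1)| ≤ 1
    have hfact : ∏ i ∈ Finset.range (n + 1), ((n : ℝ) + 1 - i) = ((n + 1).factorial : ℝ) := by
      rw [← Finset.prod_range_reflect]
      have hcongr : ∀ j ∈ Finset.range (n + 1),
          ((n : ℝ) + 1 - ((n + 1 - 1 - j : ℕ) : ℝ)) = ((j + 1 : ℕ) : ℝ) := by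
        intro j hj
        simp only [Finset.mem_range] at hj
        have hjn : j ≤ n := Nat.lt_succ_iff.mp hj
        rw [Nat.succ_sub_one, Nat.cast_sub hjn]
        push_cast
        ring
      rw [Finset.prod_congr rfl hcongr, ← Nat.cast_prod,
        Nat.cast_inj.mpr (Finset.prod_range_add_one_eq_factorial (n + 1))]
    have hnonneg : ∀ i ∈ Finset.range (n + 1), (0:ℝ) ≤ K - i := by
      intro i hi
      simp only [Finset.mem_range] at hi
      have : (i : ℝ) ≤ n := by exact_mod_cast Nat.lt_succ_iff.mp hi
      linarith
    have hle : ∀ i ∈ Finset.range (n + 1), K - (i:ℝ) ≤ (n : ℝ) + 1 - i := by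
      intro i _; linarith
    have hprod : ∏ i ∈ Finset.range (n + 1), (K - (i:ℝ)) ≤ ((n + 1).factorial : ℝ) := by
      rw [← hfact]
      exact Finset.prod_le_prod hnonneg hle
    have hprod0 : (0:ℝ) ≤ ∏ i ∈ Finset.range (n + 1), (K - (i:ℝ)) :=
      Finset.prod_nonneg hnonneg
    unfold rbinom
    rw [abs_div, abs_of_nonneg hprod0, abs_of_nonneg (by positivity : (0:ℝ) ≤ ((n+1).factorial : ℝ))]
    rw [div_le_one (by positivity)]
    simpa using hprod
  | succ h ih =>
    have hj : rbinom K (n + 1 + (h + 1)) =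
        rbinom K (n + 1 + h) * (K - (n + 1 + h : ℕ)) / ((n + 1 + h : ℕ) + 1) := by
      rw [show n + 1 + (h + 1) = (n + 1 + h) + 1 from rfl, rbinom_succ]
    rw [hj, abs_div, abs_mul]
    have hpos : (0:ℝ) < ((n + 1 + h : ℕ) : ℝ) + 1 := by positivity
    rw [abs_of_pos hpos]
    have hle : |K - ((n + 1 + h : ℕ) : ℝ)| ≤ ((n + 1 + h : ℕ) : ℝ) + 1 := by
      rw [abs_le]
      constructor
      · push_cast; linarith
      · push_cast; linarith
    rw [div_le_one hpos]
    calc |rbinom K (n + 1 + h)| * |K - ((n + 1 + h : ℕ) : ℝ)|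
        ≤ 1 * (((n + 1 + h : ℕ) : ℝ) + 1) :=
          mul_le_mul ih hle (abs_nonneg _) (by norm_num)
      _ = ((n + 1 + h : ℕ) : ℝ) + 1 := one_mul _

theorem binomial_series_tail_bound (B : ℝ) (hB : 0 < B) :
    (∀ K R : ℝ, 0 < K → B / K < 1 / 2 → |R| ≤ B / K →
      |∑' h : ℕ, rbinom K (⌊K⌋₊ + 1 + h) * R ^ (⌊K⌋₊ + 1 + h)| ≤
        (2 : ℝ) ^ (K + 1) * (B / K) ^ (K - 1) / (1 - B / K)) ∧
    ∃ C > 0, ∃ K₀ : ℝ, ∀ K ≥ K₀,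
      (2 : ℝ) ^ (K + 1) * (B / K) ^ (K - 1) / (1 - B / K) ≤ C * Real.exp (-K) := by
  constructor
  · intro K R hK hhalf hR
    set n := ⌊K⌋₊ with hn
    set q := B / K with hq
    have hq0 : 0 < q := div_pos hB hK
    have hq1 : q < 1 := hhalf.trans (by norm_num)
    have hRn : 0 ≤ |R| := abs_nonneg R
    have hterm : ∀ h : ℕ, ‖rbinom K (n + 1 + h) * R ^ (n + 1 + h)‖ ≤ q ^ (n + 1) * q ^ h := by
      intro h
      rw [Real.norm_eq_abs, abs_mul, abs_pow]
      calc |rbinom K (n + 1 + h)| * |R| ^ (n + 1 + h)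
          ≤ 1 * q ^ (n + 1 + h) :=
            mul_le_mul (abs_rbinom_le_one K hK h) (pow_le_pow_left₀ hRn hR _)
              (pow_nonneg hRn _) (by norm_num)
        _ = q ^ (n + 1) * q ^ h := by rw [one_mul, pow_add]
    have hgs : Summable (fun h : ℕ => q ^ (n + 1) * q ^ h) :=
      (summable_geometric_of_lt_one hq0.le hq1).mul_left _
    have hsum : Summable (fun h : ℕ => ‖rbinom K (n + 1 + h) * R ^ (n + 1 + h)‖) :=
      Summable.of_nonneg_of_le (fun h => norm_nonneg _) hterm hgs
    have h1q : (0:ℝ) < 1 - q := by linarith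
    calc |∑' h : ℕ, rbinom K (n + 1 + h) * R ^ (n + 1 + h)|
        ≤ ∑' h : ℕ, ‖rbinom K (n + 1 + h) * R ^ (n + 1 + h)‖ := norm_tsum_le_tsum_norm hsum
      _ ≤ ∑' h : ℕ, q ^ (n + 1) * q ^ h := Summable.tsum_le_tsum hterm hsum hgs
      _ = q ^ (n + 1) * (1 - q)⁻¹ := by
          rw [tsum_mul_left, tsum_geometric_of_lt_one hq0.le hq1]
      _ = q ^ (n + 1) / (1 - q) := by rw [div_eq_mul_inv]
      _ ≤ (2 : ℝ) ^ (K + 1) * q ^ (K - 1) / (1 - q) := by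
          have hnum : q ^ (n + 1) ≤ (2:ℝ) ^ (K + 1) * q ^ (K - 1) := by
            have h2 : q ^ (((n + 1 : ℕ) : ℝ)) ≤ q ^ (K - 1) := by
              apply Real.rpow_le_rpow_of_exponent_ge hq0 hq1.le
              have hlt : K < (n:ℝ) + 1 := Nat.lt_floor_add_one K
              push_cast
              linarith
            have h3 : q ^ (K - 1) ≤ (2:ℝ) ^ (K + 1) * q ^ (K - 1) :=
              le_mul_of_one_le_left (Real.rpow_nonneg hq0.le _)
                (Real.one_le_rpow (by norm_num) (by linarith))
            calc q ^ (n + 1) = q ^ (((n + 1 : ℕ) : ℝ)) := (Real.rpow_natCast q (n + 1)).symm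
              _ ≤ q ^ (K - 1) := h2
              _ ≤ (2:ℝ) ^ (K + 1) * q ^ (K - 1) := h3
          exact div_le_div_of_nonneg_right hnum h1q.le
  · refine ⟨8, by norm_num, max 2 (2 * B * Real.exp 2), fun K hK => ?_⟩
    have hK2 : (2:ℝ) ≤ K := le_trans (le_max_left _ _) hK
    have hKB : 2 * B * Real.exp 2 ≤ K := le_trans (le_max_right _ _) hK
    have hK0 : (0:ℝ) < K := by linarith
    set q := B / K with hq
    have hq0 : 0 < q := div_pos hB hK0
    have he2 : (4:ℝ) < Real.exp 2 := by
      have h27 : (2.7:ℝ) < Real.exp 1 := by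
        have := Real.exp_one_gt_d9; norm_num at this ⊢; linarith
      have h1 : Real.exp 2 = Real.exp 1 * Real.exp 1 := by
        rw [← Real.exp_add]; norm_num
      nlinarith
    have h2q : 2 * q ≤ Real.exp (-2) := by
      have hmul := mul_le_mul_of_nonneg_right hKB (inv_nonneg.mpr hK0.le)
      rw [mul_inv_cancel₀ hK0.ne'] at hmul
      rw [Real.exp_neg, inv_eq_one_div, le_div_iff₀ (Real.exp_pos 2)]
      calc 2 * q * Real.exp 2 = 2 * B * Real.exp 2 * K⁻¹ := by
            rw [hq, div_eq_mul_inv]; ring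
        _ ≤ 1 := hmul
    have hqhalf : q < 1/2 := by
      have h8 : 8 * B ≤ K := by nlinarith
      rw [hq, div_lt_iff₀ hK0]
      linarith
    have ha : (0:ℝ) ≤ (2:ℝ) ^ (K + 1) * q ^ (K - 1) :=
      mul_nonneg (Real.rpow_nonneg (by norm_num) _) (Real.rpow_nonneg hq0.le _)
    have key : (2 * q) ^ (K - 1) ≤ Real.exp (-K) := by
      calc (2 * q) ^ (K - 1) ≤ (Real.exp (-2)) ^ (K - 1) :=
            Real.rpow_le_rpow (by positivity) h2q (by linarith)
        _ = Real.exp (-2 * (K - 1)) := by rw [← Real.exp_mul]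
        _ ≤ Real.exp (-K) := Real.exp_le_exp.mpr (by linarith)
    calc (2 : ℝ) ^ (K + 1) * q ^ (K - 1) / (1 - q)
        ≤ (2 : ℝ) ^ (K + 1) * q ^ (K - 1) * 2 := by
          rw [div_le_iff₀ (by linarith : (0:ℝ) < 1 - q)]
          nlinarith
      _ = 8 * ((2:ℝ) ^ (K - 1) * q ^ (K - 1)) := by
          rw [show K + 1 = (K - 1) + 2 by ring, Real.rpow_add (by norm_num : (0:ℝ) < 2)]
          norm_num
          ring
      _ = 8 * (2 * q) ^ (K - 1) := by rw [← Real.mul_rpow (by norm_num) hq0.le]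
      _ ≤ 8 * Real.exp (-K) := mul_le_mul_of_nonneg_left key (by norm_num)
end

section
/- There is a constant C > 0 such that for all real K ≥ 1 and all real L with K/2 < L ≤ K, ∫_{x₀}^{1/2} (log(1/x))^L dx ≤ Γ(L+1) exp(−C K), where x₀ = exp(−⌊(⌊K⌋+1)/100⌋). -/
/-!
On `[x₀, 1/2]` with `x₀ = e^{-m}` the integrand is at most `m^L`, so the integral is at most
`m^L / 2`. On the other hand `Γ(L+1) ≥ ∫_{2m}^∞ e^{-x} x^L dx ≥ (2m)^L e^{-2m}`. Since
`m ≤ K/50` while `L > K/2`, the factor `2^L` beats `e^{2m}` by `e^{cK}`.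
-/

open MeasureTheory Set Real

theorem setIntegral_Icc_exp_neg_log_one_div_rpow_le {s b L : ℝ} (hs : 0 ≤ s) (hb₀ : 0 ≤ b)
    (hb₁ : b ≤ 1) (hL : 0 ≤ L) :
    ∫ x in Icc (exp (-s)) b, log (1 / x) ^ L ≤ b * s ^ L := by
  have hbound : ∀ x ∈ Icc (exp (-s)) b, ‖log (1 / x) ^ L‖ ≤ s ^ L := by
    rintro x ⟨hsx, hxb⟩
    have hx : 0 < x := (exp_pos _).trans_le hsx
    have hlog₀ : 0 ≤ log (1 / x) := log_nonneg (by rw [le_div_iff₀ hx]; linarith)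
    have hlog_le : log (1 / x) ≤ s := by
      rw [one_div, log_inv, neg_le]
      simpa using log_le_log (exp_pos _) hsx
    rw [Real.norm_of_nonneg (rpow_nonneg hlog₀ _)]
    exact rpow_le_rpow hlog₀ hlog_le hL
  have hvol : volume.real (Icc (exp (-s)) b) ≤ b := by
    rw [volume_real_Icc]
    exact max_le (by linarith [exp_pos (-s)]) hb₀
  calc ∫ x in Icc (exp (-s)) b, log (1 / x) ^ L
      ≤ ‖∫ x in Icc (exp (-s)) b, log (1 / x) ^ L‖ := le_norm_self _
    _ ≤ s ^ L * volume.real (Icc (exp (-s)) b) :=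
        norm_setIntegral_le_of_norm_le_const measure_Icc_lt_top hbound
    _ ≤ b * s ^ L := by
        rw [mul_comm]; exact mul_le_mul_of_nonneg_right hvol (rpow_nonneg hs _)

theorem rpow_mul_exp_neg_le_Gamma_add_one {s t : ℝ} (hs : 0 ≤ s) (ht : 0 ≤ t) :
    t ^ s * exp (-t) ≤ Gamma (s + 1) := by
  have hint : IntegrableOn (fun x ↦ exp (-x) * x ^ s) (Ioi 0) := by
    simpa using GammaIntegral_convergent (s := s + 1) (by linarith)
  have hnonneg : ∀ x ∈ Ioi (0 : ℝ), 0 ≤ exp (-x) * x ^ s := fun x hx ↦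
    mul_nonneg (exp_pos _).le (rpow_nonneg (le_of_lt hx) _)
  have hsub : Ioi t ⊆ Ioi 0 := Ioi_subset_Ioi ht
  calc t ^ s * exp (-t) = ∫ x in Ioi t, exp (-x) * t ^ s := by
        rw [integral_mul_const, integral_exp_neg_Ioi, mul_comm]
    _ ≤ ∫ x in Ioi t, exp (-x) * x ^ s := by
        refine setIntegral_mono_on ?_ (hint.mono_set hsub) measurableSet_Ioi fun x hx ↦ ?_
        · have hexp : IntegrableOn (fun x ↦ exp (-x)) (Ioi t) := by
            simpa using exp_neg_integrableOn_Ioi t one_pos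
          exact hexp.mul_const _
        · exact mul_le_mul_of_nonneg_left (rpow_le_rpow ht (le_of_lt hx) hs) (exp_pos _).le
    _ ≤ ∫ x in Ioi 0, exp (-x) * x ^ s :=
        setIntegral_mono_set hint
          (Filter.eventually_of_mem (ae_restrict_mem measurableSet_Ioi) hnonneg)
          hsub.eventuallyLE
    _ = Gamma (s + 1) := by rw [Gamma_eq_integral (by linarith), add_sub_cancel_right]

theorem integral_log_rpow_tail :
    ∃ C > 0, ∀ K : ℝ, 1 ≤ K → ∀ L : ℝ, K / 2 < L → L ≤ K →
      (∫ x in Icc (Real.exp (-(((⌊K⌋₊ + 1) / 100 : ℕ) : ℝ))) (1 / 2 : ℝ),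
          Real.log (1 / x) ^ L) ≤ Real.Gamma (L + 1) * Real.exp (-C * K) := by
  refine ⟨1 / 10, by norm_num, fun K hK L hKL _ ↦ ?_⟩
  set m : ℕ := (⌊K⌋₊ + 1) / 100
  have hL : 0 ≤ L := by linarith
  have hmK : (m : ℝ) ≤ K / 50 := by
    have hm : (m : ℝ) ≤ ((⌊K⌋₊ + 1 : ℕ) : ℝ) / 100 := Nat.cast_div_le
    push_cast at hm
    linarith [Nat.floor_le (by linarith : 0 ≤ K)]
  have hgain : 1 ≤ 2 ^ L * exp (-(2 * m)) * exp (-(1 / 10) * K) := by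
    rw [rpow_def_of_pos two_pos, ← exp_add, ← exp_add]
    exact one_le_exp (by nlinarith [log_two_gt_d9])
  calc (∫ x in Icc (exp (-(m : ℝ))) (1 / 2 : ℝ), log (1 / x) ^ L)
      ≤ 1 / 2 * (m : ℝ) ^ L :=
        setIntegral_Icc_exp_neg_log_one_div_rpow_le m.cast_nonneg (by norm_num) (by norm_num) hL
    _ ≤ (2 * m) ^ L * exp (-(2 * m)) * exp (-(1 / 10) * K) := by
        rw [mul_rpow zero_le_two m.cast_nonneg]
        nlinarith [rpow_nonneg m.cast_nonneg L]
    _ ≤ Gamma (L + 1) * exp (-(1 / 10) * K) :=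
        mul_le_mul_of_nonneg_right
          (rpow_mul_exp_neg_le_Gamma_add_one hL (by positivity)) (exp_pos _).le
end

section
/- If x ∈ (0,1) is a Wilton number (so that W(x) = Σ_{k≥0} (−1)^k γ_k(x) converges), then for every n ∈ ℕ, W(x) = L(x,n) + (−1)^{n+1} T^{n+1}W(x), where L(x,n) = Σ_{v=0}^n (−1)^v (T^v l)(x), l(x) = log(1/x), and Tf(x) = x f(α(x)). -/
open Filter

/-- The operator `Tf(x) = x f(α(x))`. -/
noncomputable def Tgauss (f : ℝ → ℝ) : ℝ → ℝ := fun x => x * f (Int.fract x⁻¹)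

lemma Tgauss_iter (f : ℝ → ℝ) (v : ℕ) (x : ℝ) :
    Tgauss^[v] f x = (∏ i ∈ Finset.range v, alphaIter x i) * f (alphaIter x v) := by
  induction v generalizing f with
  | zero => simp [alphaIter]
  | succ v ih =>
    rw [Function.iterate_succ_apply, ih]
    have h : alphaIter x (v + 1) = Int.fract (alphaIter x v)⁻¹ := by
      simp [alphaIter, Function.iterate_succ_apply']
    rw [Finset.prod_range_succ, h]
    simp only [Tgauss]
    ring

lemma alphaIter_add (x : ℝ) (m j : ℕ) :
    alphaIter x (m + j) = alphaIter (alphaIter x m) j := by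
  simp [alphaIter, add_comm m j, Function.iterate_add_apply]

lemma gammaTerm_shift (x : ℝ) (m k : ℕ) :
    gammaTerm x (m + k)
      = (∏ i ∈ Finset.range m, alphaIter x i) * gammaTerm (alphaIter x m) k := by
  unfold gammaTerm
  rw [Finset.prod_range_add, alphaIter_add]
  simp only [alphaIter_add]
  ring

theorem wilton_partial_sum_identity (x : ℝ) (hx : x ∈ Set.Ioo (0:ℝ) 1)
    (hirr : Irrational x) (n : ℕ) (W : ℝ → ℝ)
    (hWx : Tendsto (fun N => ∑ k ∈ Finset.range N, (-1 : ℝ) ^ k * gammaTerm x k)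
      atTop (nhds (W x)))
    (hWy : Tendsto
      (fun N => ∑ k ∈ Finset.range N, (-1 : ℝ) ^ k * gammaTerm (alphaIter x (n + 1)) k)
      atTop (nhds (W (alphaIter x (n + 1))))) :
    W x = (∑ v ∈ Finset.range (n + 1), (-1 : ℝ) ^ v *
        Tgauss^[v] (fun y => Real.log (1 / y)) x) +
      (-1 : ℝ) ^ (n + 1) * Tgauss^[n + 1] W x := by
  set y := alphaIter x (n + 1) with hy
  set β := ∏ i ∈ Finset.range (n + 1), alphaIter x i with hβ
  have hsum : ∀ M : ℕ,
      (∑ k ∈ Finset.range (M + (n + 1)), (-1 : ℝ) ^ k * gammaTerm x k)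
        = (∑ v ∈ Finset.range (n + 1), (-1 : ℝ) ^ v * gammaTerm x v)
          + (-1 : ℝ) ^ (n + 1) * β *
            ∑ k ∈ Finset.range M, (-1 : ℝ) ^ k * gammaTerm y k := by
    intro M
    rw [add_comm M (n + 1), Finset.sum_range_add]
    congr 1
    rw [Finset.mul_sum]
    apply Finset.sum_congr rfl
    intro k _
    rw [gammaTerm_shift, pow_add, hy, hβ]
    ring
  have h1 : Tendsto
      (fun M => ∑ k ∈ Finset.range (M + (n + 1)), (-1 : ℝ) ^ k * gammaTerm x k)
      atTop (nhds (W x)) := hWx.comp (tendsto_add_atTop_nat (n + 1))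
  have h2 : Tendsto
      (fun M => (∑ v ∈ Finset.range (n + 1), (-1 : ℝ) ^ v * gammaTerm x v)
          + (-1 : ℝ) ^ (n + 1) * β *
            ∑ k ∈ Finset.range M, (-1 : ℝ) ^ k * gammaTerm y k)
      atTop (nhds ((∑ v ∈ Finset.range (n + 1), (-1 : ℝ) ^ v * gammaTerm x v)
          + (-1 : ℝ) ^ (n + 1) * β * W y)) :=
    tendsto_const_nhds.add (hWy.const_mul _)
  have h1' : Tendsto
      (fun M => (∑ v ∈ Finset.range (n + 1), (-1 : ℝ) ^ v * gammaTerm x v)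
          + (-1 : ℝ) ^ (n + 1) * β *
            ∑ k ∈ Finset.range M, (-1 : ℝ) ^ k * gammaTerm y k)
      atTop (nhds (W x)) := by
    have := h1
    simp only [hsum] at this
    exact this
  have key := tendsto_nhds_unique h1' h2
  rw [key, Tgauss_iter]
  congr 1
  · apply Finset.sum_congr rfl
    intro v _
    rw [Tgauss_iter]
    rfl
  · rw [← hy, ← hβ, mul_assoc]
end
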